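/- arXiv:1704.06674 — 4 statements merged into one kernel-verified Lean document; each statement's English description precedes it below -/
import Mathlib

section
/- Let x ∈ {0,1} and z : B × {1,…,n} → {0,1} satisfy the GUB constraints ∑_{l=1}^{n} z_{b,l} = 1 for every b ∈ B and the discrete big-M SIR constraint ∑_{b ∈ B∖{β}} a_b ∑_{l=1}^{n} P_l · z_{b,l} − a_β ∑_{l=1}^{n} P_l · z_{β,l} + M·x ≤ δ + M. Then for every nonempty subset Γ = {b_1,…,b_k} ⊆ B∖{β}, every serving level λ ∈ {1,…,n}, and every k-tuple of levels (q_1,…,q_k) ∈ {1,…,n}^k satisfying the cover condition ∑_{i=1}^{k} a_{b_i} · P_{q_i} − a_β · P_λ > δ, the GUB cover inequality x + ∑_{l=1}^{λ} z_{β,l} + ∑_{i=1}^{k} ∑_{j=q_i}^{n} z_{b_i,j} ≤ k + 1 holds. -/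
open Finset

/-! By the GUB constraints every transmitter `b` uses exactly one level `ℓ b`, so the `z`-sums
of the cover inequality are the indicators of `ℓ β ≤ λ` and of `q b ≤ ℓ b` (`b ∈ Γ`). The left
side can thus exceed `k + 1` only if `x = 1` and all `k + 1` indicators hold. But then, as `P` is
monotone and all terms `a b * P l` are nonnegative, the left side of the cover condition is
bounded by that of the SIR constraint, which `x = 1` forces to be at most `δ`. -/

lemma exists_eq_ite_of_sum_eq_one {ι : Type*} [Fintype ι] [DecidableEq ι] {w : ι → ℝ}
    (h01 : ∀ i, w i = 0 ∨ w i = 1) (hsum : ∑ i, w i = 1) :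
    ∃ i₀, ∀ i, w i = if i = i₀ then 1 else 0 := by
  obtain ⟨i₀, hi₀⟩ : ∃ i₀, w i₀ = 1 := by
    by_contra! h
    have : ∑ i, w i = 0 := sum_eq_zero fun i _ => (h01 i).resolve_right (h i)
    linarith
  have hrest : ∑ i ∈ univ.erase i₀, w i = 0 := by
    rw [← add_sum_erase _ _ (mem_univ i₀), hi₀] at hsum
    linarith
  have hnn : ∀ i ∈ univ.erase i₀, 0 ≤ w i := fun i _ => (h01 i).elim (·.ge) (· ▸ zero_le_one)
  refine ⟨i₀, fun i => ?_⟩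
  split_ifs with h
  · rw [h, hi₀]
  · exact (sum_eq_zero_iff_of_nonneg hnn).1 hrest i (mem_erase.2 ⟨h, mem_univ i⟩)

lemma sum_mul_sub_le_sum_erase_mul_sub {B α : Type*} [Fintype B] [DecidableEq B] [Preorder α]
    {P : α → ℝ} (hPnn : ∀ l, 0 ≤ P l) (hPmono : Monotone P) {a : B → ℝ} (ha : ∀ b, 0 ≤ a b)
    {β : B} {Γ : Finset B} (hΓβ : β ∉ Γ) {ℓ q : B → α} {lam : α}
    (hβ : ℓ β ≤ lam) (hΓ : ∀ b ∈ Γ, q b ≤ ℓ b) :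
    ∑ b ∈ Γ, a b * P (q b) - a β * P lam
      ≤ ∑ b ∈ univ.erase β, a b * P (ℓ b) - a β * P (ℓ β) := by
  have hΓsub : Γ ⊆ univ.erase β := fun b hb =>
    mem_erase.2 ⟨ne_of_mem_of_not_mem hb hΓβ, mem_univ b⟩
  gcongr ?_ - a β * ?_
  · calc ∑ b ∈ Γ, a b * P (q b) ≤ ∑ b ∈ Γ, a b * P (ℓ b) :=
          sum_le_sum fun b hb => mul_le_mul_of_nonneg_left (hPmono (hΓ b hb)) (ha b)
      _ ≤ ∑ b ∈ univ.erase β, a b * P (ℓ b) :=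
          sum_le_sum_of_subset_of_nonneg hΓsub fun b _ _ => mul_nonneg (ha b) (hPnn _)
  · exact ha β
  · exact hPmono hβ

lemma add_ite_add_card_filter_le {ι : Type*} {s : Finset ι} {p : ι → Prop} [DecidablePred p]
    {c : Prop} [Decidable c] {x : ℝ} (hx : x = 0 ∨ x = 1) (h : x = 1 → c → ∃ i ∈ s, ¬ p i) :
    x + (if c then 1 else 0) + (#(s.filter p) : ℝ) ≤ #s + 1 := by
  have hfilter : (#(s.filter p) : ℝ) ≤ #s := by exact_mod_cast card_filter_le s p
  rcases hx with rfl | rfl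
  · have : (if c then (1 : ℝ) else 0) ≤ 1 := by split_ifs <;> norm_num
    linarith
  · by_cases hc : c
    · have : (#(s.filter p) : ℝ) + 1 ≤ #s := by
        exact_mod_cast card_lt_card (filter_ssubset.2 (h rfl hc))
      simp only [hc, if_true]
      linarith
    · simp only [hc, if_false]
      linarith

theorem gub_cover_inequality_valid_general
    {B : Type*} [Fintype B] [DecidableEq B] (β : B) (n : ℕ) (hn : 0 < n)
    (P : Fin n → ℝ) (hP1 : P ⟨0, hn⟩ = 0) (hPmono : Monotone P)
    (a : B → ℝ) (ha : ∀ b, 0 < a b) (δ M : ℝ)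
    (x : ℝ) (hx : x = 0 ∨ x = 1)
    (z : B → Fin n → ℝ) (hz01 : ∀ b l, z b l = 0 ∨ z b l = 1)
    (hgub : ∀ b, ∑ l, z b l = 1)
    (hSIR : ∑ b ∈ Finset.univ.erase β, a b * ∑ l, P l * z b l
              - a β * ∑ l, P l * z β l + M * x ≤ δ + M)
    (Γ : Finset B) (hΓβ : β ∉ Γ)
    (lam : Fin n) (q : B → Fin n)
    (hcover : ∑ b ∈ Γ, a b * P (q b) - a β * P lam > δ) :
    x + ∑ l ∈ Finset.Iic lam, z β l
      + ∑ b ∈ Γ, ∑ j ∈ Finset.Ici (q b), z b j ≤ Γ.card + 1 := by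
  choose ℓ hℓ using fun b => exists_eq_ite_of_sum_eq_one (hz01 b) (hgub b)
  obtain rfl : z = fun b l => if l = ℓ b then 1 else 0 := funext fun b => funext (hℓ b)
  simp only [mul_ite, mul_one, mul_zero, sum_ite_eq', mem_univ, if_true, mem_Iic,
    mem_Ici, sum_boole] at hSIR ⊢
  have hPnn : ∀ l, 0 ≤ P l := fun l => hP1 ▸ hPmono (Nat.zero_le l.val)
  refine add_ite_add_card_filter_le hx fun hx1 hβ => ?_
  by_contra! hΓ
  have hcover_le :=
    sum_mul_sub_le_sum_erase_mul_sub hPnn hPmono (fun b => (ha b).le) hΓβ hβ hΓ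
  rw [hx1] at hSIR
  linarith

/-- **GUB cover inequalities are valid for the discrete big-M SIR constraint.**
`B` is a finite set of transmitters with designated server `β`; power levels are
`Fin n` with nondecreasing nonnegative power values `P` (with `P 1 = 0`);
fading coefficients `a b > 0`.  Any 0-1 point `(x, z)` satisfying the GUB
constraints and the discrete big-M SIR constraint satisfies every GUB cover
inequality. -/
theorem gub_cover_inequality_valid
    {B : Type*} [Fintype B] [DecidableEq B] (β : B) (n : ℕ) (hn : 0 < n)
    (P : Fin n → ℝ) (hP1 : P ⟨0, hn⟩ = 0) (hPmono : Monotone P)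
    (a : B → ℝ) (ha : ∀ b, 0 < a b) (δ M : ℝ)
    (x : ℝ) (hx : x = 0 ∨ x = 1)
    (z : B → Fin n → ℝ) (hz01 : ∀ b l, z b l = 0 ∨ z b l = 1)
    (hgub : ∀ b, ∑ l, z b l = 1)
    (hSIR : ∑ b ∈ Finset.univ.erase β, a b * ∑ l, P l * z b l
              - a β * ∑ l, P l * z β l + M * x ≤ δ + M)
    (Γ : Finset B) (hΓne : Γ.Nonempty) (hΓβ : β ∉ Γ)
    (lam : Fin n) (q : B → Fin n)
    (hcover : ∑ b ∈ Γ, a b * P (q b) - a β * P lam > δ) :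
    x + ∑ l ∈ Finset.Iic lam, z β l
      + ∑ b ∈ Γ, ∑ j ∈ Finset.Ici (q b), z b j ≤ Γ.card + 1 :=
  gub_cover_inequality_valid_general β n hn P hP1 hPmono a ha δ M x hx z hz01 hgub hSIR Γ hΓβ lam q
    hcover
end

section
/- Let n ≥ 1 and let q : {1,…,n} → {1,…,n+1} be nondecreasing. Let P be the polytope of all points (u, v, w) ∈ ℝ × ℝ^n × ℝ^n satisfying 0 ≤ u ≤ 1, 0 ≤ v_l ≤ 1 and 0 ≤ w_l ≤ 1 for all l ∈ {1,…,n}, and, for each λ ∈ {1,…,n}, the inequality u + ∑_{l=1}^{λ} v_l + ∑_{l=q(λ)}^{n} w_l ≤ 2 (where the last sum is empty if q(λ) = n+1). Then P equals the convex hull of its 0-1 points, i.e. P = conv(P ∩ {0,1}^{1+2n}). -/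
/-!
Order the coordinates as `w_0, …, w_{n-1}, u, v_0, …, v_{n-1}`. Each cover inequality then bounds
the sum of a block of consecutive coordinates, i.e. the constraint matrix is an interval matrix.
Let `x` be an extreme point and `σ_k` the sum of its first `k` coordinates. If some `σ_k` is not an
integer, let `y_m` be `1` when `σ_m ≡ σ_k (mod 1)` and `0` otherwise, and move `x` along the
discrete derivative `Δy`, which is nonzero because `y_0 = 0 ≠ y_k`. Integral coordinates and tight
inequalities have integral differences of prefix sums at their endpoints, so they are left
unchanged; every other constraint has slack. Hence
`x ± εΔy` stays in the polytope for small `ε`, contradicting extremality. So all prefix sums, and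
with them all coordinates, are integers, and Krein–Milman finishes the proof.
-/

open Finset Filter Topology

theorem eq_zero_of_mem_extremePoints_of_eventually_mem {E : Type*} [AddCommGroup E] [Module ℝ E]
    {s : Set E} {x d : E} (hx : x ∈ s.extremePoints ℝ)
    (hd : ∀ᶠ t in 𝓝 (0 : ℝ), x + t • d ∈ s) : d = 0 := by
  obtain ⟨ε, hε, hball⟩ := Metric.eventually_nhds_iff.mp hd
  have hmem : ∀ t, |t| < ε → x + t • d ∈ s := fun t ht => hball (by simpa using ht)
  have hseg : x ∈ openSegment ℝ (x + (ε / 2) • d) (x + (-(ε / 2)) • d) :=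
    ⟨1 / 2, 1 / 2, by norm_num, by norm_num, by norm_num, by module⟩
  have := hx.2 (hmem _ (by rw [abs_of_pos (by positivity)]; linarith))
    (hmem _ (by rw [abs_neg, abs_of_pos (by positivity)]; linarith)) hseg
  simpa [hε.ne'] using this

theorem eventually_add_mul_mem {a b : ℝ} {s : Set ℝ} (h : s ∈ 𝓝 a ∨ a ∈ s ∧ b = 0) :
    ∀ᶠ t in 𝓝 (0 : ℝ), a + t * b ∈ s := by
  rcases h with h | ⟨ha, rfl⟩
  · exact (Continuous.tendsto' (f := fun t => a + t * b) (by fun_prop) 0 a (by simp)) h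
  · simpa using ha

theorem Convex.eq_convexHull_of_extremePoints_subset {E : Type*} [AddCommGroup E] [Module ℝ E]
    [TopologicalSpace E] [T2Space E] [IsTopologicalAddGroup E] [ContinuousSMul ℝ E]
    [LocallyConvexSpace ℝ E] {s t : Set E} (hconv : Convex ℝ s) (hcomp : IsCompact s)
    (ht : t.Finite) (hts : t ⊆ s) (hext : s.extremePoints ℝ ⊆ t) : s = convexHull ℝ t := by
  refine (convexHull_min hts hconv).antisymm' ?_
  calc s = closure (convexHull ℝ (s.extremePoints ℝ)) :=
        (closure_convexHull_extremePoints hcomp hconv).symm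
    _ ⊆ closure (convexHull ℝ t) := closure_mono (convexHull_mono hext)
    _ = convexHull ℝ t := (ht.isClosed_convexHull ℝ).closure_eq

theorem LinearEquiv.preimage_convexHull {E F : Type*} [AddCommGroup E] [Module ℝ E]
    [AddCommGroup F] [Module ℝ F] (e : E ≃ₗ[ℝ] F) (s : Set F) :
    e ⁻¹' convexHull ℝ s = convexHull ℝ (e ⁻¹' s) := by
  rw [← e.image_symm_eq_preimage, ← e.image_symm_eq_preimage]
  exact e.symm.toLinearMap.image_convexHull s

section IntervalPolytope

variable {κ ι : Type*} [Fintype κ] (pos : κ → ℕ)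

def prefixSum (z : κ → ℝ) (k : ℕ) : ℝ :=
  ∑ j ∈ univ.filter (fun j => pos j < k), z j

theorem prefixSum_zero (z : κ → ℝ) : prefixSum pos z 0 = 0 := by
  simp [prefixSum]

theorem sum_filter_le_lt_eq_prefixSum_sub (z : κ → ℝ) (a b : ℕ) :
    ∑ j ∈ univ.filter (fun j => a ≤ pos j ∧ pos j < b), z j
      = prefixSum pos z (max a b) - prefixSum pos z a := by
  classical
  rw [prefixSum, prefixSum, eq_sub_iff_add_eq,
    ← sum_union (disjoint_filter.2 fun j _ h => by omega)]
  congr 1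
  ext j
  simp only [mem_union, mem_filter, mem_univ, true_and]
  omega

theorem prefixSum_succ_of_notMem_range (z : κ → ℝ) {k : ℕ} (hk : k ∉ Set.range pos) :
    prefixSum pos z (k + 1) = prefixSum pos z k := by
  refine sum_congr (filter_congr fun j _ => ?_) fun _ _ => rfl
  have : pos j ≠ k := fun h => hk ⟨j, h⟩
  omega

variable {pos}

theorem prefixSum_succ_pos (hpos : Function.Injective pos) (z : κ → ℝ) (j : κ) :
    prefixSum pos z (pos j + 1) = prefixSum pos z (pos j) + z j := by
  classical
  have : univ.filter (fun i => pos i < pos j + 1)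
      = insert j (univ.filter (fun i => pos i < pos j)) := by
    ext i
    simp only [mem_filter, mem_univ, true_and, mem_insert]
    rw [← hpos.eq_iff]
    omega
  rw [prefixSum, this, sum_insert (by simp), add_comm]
  rfl

theorem prefixSum_telescope (hpos : Function.Injective pos) (g : ℕ → ℝ)
    (hg : ∀ k ∉ Set.range pos, g (k + 1) = g k) (k : ℕ) :
    prefixSum pos (fun j => g (pos j + 1) - g (pos j)) k = g k - g 0 := by
  induction k with
  | zero => simp [prefixSum_zero]
  | succ k ih =>
    by_cases hk : k ∈ Set.range pos
    · obtain ⟨j, rfl⟩ := hk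
      rw [prefixSum_succ_pos hpos, ih]
      ring
    · rw [prefixSum_succ_of_notMem_range pos _ hk, ih, hg k hk]

variable (pos) in
def intervalPolytope (a b : ι → ℕ) (c : ι → ℤ) : Set (κ → ℝ) :=
  {x | (∀ j, x j ∈ Set.Icc 0 1) ∧
    ∀ i, ∑ j ∈ univ.filter (fun j => a i ≤ pos j ∧ pos j < b i), x j ≤ c i}

variable {a b : ι → ℕ} {c : ι → ℤ}

theorem convex_intervalPolytope : Convex ℝ (intervalPolytope pos a b c) := by
  rintro x ⟨hx, hxc⟩ y ⟨hy, hyc⟩ s t hs ht hst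
  refine ⟨fun j => convex_Icc 0 1 (hx j) (hy j) hs ht hst, fun i => ?_⟩
  simp only [Pi.add_apply, Pi.smul_apply, smul_eq_mul, sum_add_distrib, ← mul_sum]
  calc s * _ + t * _ ≤ s * c i + t * c i := by gcongr; exacts [hxc i, hyc i]
    _ = c i := by rw [← add_mul, hst, one_mul]

theorem isClosed_intervalPolytope : IsClosed (intervalPolytope pos a b c) := by
  simp only [intervalPolytope, Set.mem_Icc, Set.ofPred_and, Set.ofPred_forall]
  refine .inter (isClosed_iInter fun j => .inter ?_ ?_) (isClosed_iInter fun i => ?_) <;>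
    exact isClosed_le (by fun_prop) (by fun_prop)

theorem isCompact_intervalPolytope : IsCompact (intervalPolytope pos a b c) :=
  isCompact_Icc.of_isClosed_subset isClosed_intervalPolytope
    fun _ hx => ⟨fun j => (hx.1 j).1, fun j => (hx.1 j).2⟩

variable [Finite ι]

theorem eventually_add_smul_mem_intervalPolytope {x d : κ → ℝ}
    (hx : x ∈ intervalPolytope pos a b c) (hd : ∀ j, (x j = 0 ∨ x j = 1) → d j = 0)
    (htight : ∀ i, ∑ j ∈ univ.filter (fun j => a i ≤ pos j ∧ pos j < b i), x j = c i →
      ∑ j ∈ univ.filter (fun j => a i ≤ pos j ∧ pos j < b i), d j = 0) :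
    ∀ᶠ t in 𝓝 (0 : ℝ), x + t • d ∈ intervalPolytope pos a b c := by
  obtain ⟨hbox, hrows⟩ := hx
  simp only [intervalPolytope, Set.mem_ofPred_eq, Pi.add_apply, Pi.smul_apply, smul_eq_mul,
    sum_add_distrib, ← mul_sum]
  refine (eventually_all.2 fun j => eventually_add_mul_mem ?_).and
    (eventually_all.2 fun i => eventually_add_mul_mem (s := Set.Iic (c i : ℝ)) ?_)
  · by_cases hj : x j = 0 ∨ x j = 1
    · exact .inr ⟨hbox j, hd j hj⟩
    · rw [not_or] at hj
      exact .inl (Icc_mem_nhds ((hbox j).1.lt_of_ne' hj.1) ((hbox j).2.lt_of_ne hj.2))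
  · rcases (hrows i).lt_or_eq with hlt | heq
    · exact .inl (Iic_mem_nhds hlt)
    · exact .inr ⟨heq.le, htight i heq⟩

theorem fract_prefixSum_eq_zero_of_mem_extremePoints (hpos : Function.Injective pos)
    {x : κ → ℝ} (hx : x ∈ (intervalPolytope pos a b c).extremePoints ℝ) (k : ℕ) :
    Int.fract (prefixSum pos x k) = 0 := by
  by_contra hk
  set σ := prefixSum pos x
  let y : ℕ → ℝ := fun m => if Int.fract (σ m) = Int.fract (σ k) then 1 else 0
  have hy : ∀ m m', (∃ z : ℤ, σ m - σ m' = z) → y m = y m' := by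
    intro m m' h
    simp only [y, Int.fract_eq_fract.2 h]
  let d : κ → ℝ := fun j => y (pos j + 1) - y (pos j)
  have hd : ∀ m, prefixSum pos d m = y m - y 0 := prefixSum_telescope hpos y
    fun m hm => hy _ _ ⟨0, by simp [σ, prefixSum_succ_of_notMem_range pos x hm]⟩
  have hmove : ∀ᶠ t in 𝓝 (0 : ℝ), x + t • d ∈ intervalPolytope pos a b c := by
    refine eventually_add_smul_mem_intervalPolytope hx.1 (fun j hj => ?_) (fun i hi => ?_)
    · refine sub_eq_zero.2 (hy _ _ ?_)
      simp only [σ, prefixSum_succ_pos hpos, add_sub_cancel_left]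
      rcases hj with h | h
      exacts [⟨0, by simp [h]⟩, ⟨1, by simp [h]⟩]
    · rw [sum_filter_le_lt_eq_prefixSum_sub, hd, hd,
        hy _ _ ⟨c i, (sum_filter_le_lt_eq_prefixSum_sub pos x _ _).symm.trans hi⟩, sub_self]
  have hd0 := eq_zero_of_mem_extremePoints_of_eventually_mem hx hmove
  have : prefixSum pos d k = 1 := by
    simp [hd, y, σ, prefixSum_zero, Ne.symm hk]
  simp [hd0, prefixSum] at this

theorem mem_extremePoints_intervalPolytope (hpos : Function.Injective pos)
    {x : κ → ℝ} (hx : x ∈ (intervalPolytope pos a b c).extremePoints ℝ) (j : κ) :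
    x j = 0 ∨ x j = 1 := by
  obtain ⟨z, hz⟩ := Int.fract_eq_fract.1
    ((fract_prefixSum_eq_zero_of_mem_extremePoints hpos hx (pos j + 1)).trans
      (fract_prefixSum_eq_zero_of_mem_extremePoints hpos hx (pos j)).symm)
  rw [prefixSum_succ_pos hpos, add_sub_cancel_left] at hz
  have hbox := hx.1.1 j
  rw [hz, Set.mem_Icc] at hbox
  have : z = 0 ∨ z = 1 := by
    obtain ⟨h0, h1⟩ := hbox
    have : 0 ≤ z := by exact_mod_cast h0
    have : z ≤ 1 := by exact_mod_cast h1
    omega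
  rcases this with rfl | rfl <;> simp [hz]

theorem intervalPolytope_eq_convexHull (hpos : Function.Injective pos) :
    intervalPolytope pos a b c
      = convexHull ℝ (intervalPolytope pos a b c ∩ {x | ∀ j, x j = 0 ∨ x j = 1}) := by
  refine convex_intervalPolytope.eq_convexHull_of_extremePoints_subset isCompact_intervalPolytope
    ?_ Set.inter_subset_left fun x hx => ⟨hx.1, mem_extremePoints_intervalPolytope hpos hx⟩
  refine (Set.Finite.pi (t := fun _ : κ => ({0, 1} : Set ℝ)) fun _ => Set.toFinite _).subset ?_
  exact fun x hx j _ => hx.2 j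

end IntervalPolytope

section GUB

variable (n : ℕ)

def gubCoords : (ℝ × (Fin n → ℝ) × (Fin n → ℝ)) ≃ₗ[ℝ] (Unit ⊕ Fin n ⊕ Fin n → ℝ) :=
  ((LinearEquiv.funUnique Unit ℝ ℝ).symm.prodCongr
    (LinearEquiv.sumArrowLequivProdArrow _ _ ℝ ℝ).symm).trans
    (LinearEquiv.sumArrowLequivProdArrow _ _ ℝ ℝ).symm

theorem gubCoords_apply (p : ℝ × (Fin n → ℝ) × (Fin n → ℝ)) :
    gubCoords n p = Sum.elim (fun _ => p.1) (Sum.elim p.2.1 p.2.2) := by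
  ext (_ | _ | _) <;> rfl

def gubPos : Unit ⊕ Fin n ⊕ Fin n → ℕ
  | .inl _ => n
  | .inr (.inl l) => n + 1 + l
  | .inr (.inr l) => l

theorem gubPos_injective : Function.Injective (gubPos n) := by
  rintro (_ | l | l) (_ | l' | l') h <;> simp [gubPos, Fin.val_inj] at h ⊢ <;> omega

theorem sum_gubCoords_eq (q : Fin n → Fin (n + 1)) (lam : Fin n)
    (p : ℝ × (Fin n → ℝ) × (Fin n → ℝ)) :
    ∑ j ∈ univ.filter (fun j => (q lam : ℕ) ≤ gubPos n j ∧ gubPos n j < n + 2 + lam),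
        gubCoords n p j
      = p.1 + ∑ l ∈ Iic lam, p.2.1 l
          + ∑ l ∈ univ.filter (fun l : Fin n => (q lam : ℕ) ≤ (l : ℕ)), p.2.2 l := by
  have hq := (q lam).isLt
  rw [sum_filter, sum_filter, ← filter_ge_eq_Iic, sum_filter]
  simp only [Fintype.sum_sum_type, gubCoords_apply, gubPos, Sum.elim_inl, Sum.elim_inr,
    Fintype.sum_unique]
  rw [if_pos (by omega), ← add_assoc]
  congr 2
  · refine sum_congr rfl fun l _ => ?_
    congr 1
    rw [Fin.le_def, eq_iff_iff]
    omega
  · funext l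
    congr 1
    rw [eq_iff_iff]
    omega

end GUB

theorem single_interferer_polytope_is_integral_general
    (n : ℕ) (q : Fin n → Fin (n + 1))
    (S : Set (ℝ × (Fin n → ℝ) × (Fin n → ℝ)))
    (hS : S = {p | 0 ≤ p.1 ∧ p.1 ≤ 1 ∧
      (∀ l, 0 ≤ p.2.1 l ∧ p.2.1 l ≤ 1) ∧
      (∀ l, 0 ≤ p.2.2 l ∧ p.2.2 l ≤ 1) ∧
      ∀ lam : Fin n,
        p.1 + ∑ l ∈ Finset.Iic lam, p.2.1 l
          + ∑ l ∈ Finset.univ.filter (fun l : Fin n => (q lam : ℕ) ≤ (l : ℕ)), p.2.2 l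
          ≤ 2}) :
    S = convexHull ℝ (S ∩ {p : ℝ × (Fin n → ℝ) × (Fin n → ℝ) |
      (p.1 = 0 ∨ p.1 = 1) ∧ (∀ l, p.2.1 l = 0 ∨ p.2.1 l = 1) ∧
      (∀ l, p.2.2 l = 0 ∨ p.2.2 l = 1)}) := by
  have hS' : S = gubCoords n ⁻¹' intervalPolytope (gubPos n) (fun lam => q lam)
      (fun lam => n + 2 + lam) (fun _ => 2) := by
    ext p
    simp only [hS, intervalPolytope, Set.mem_preimage, Set.mem_ofPred_eq, sum_gubCoords_eq]
    simp [gubCoords_apply, Sum.forall, and_assoc]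
  have h01 : {p : ℝ × (Fin n → ℝ) × (Fin n → ℝ) | (p.1 = 0 ∨ p.1 = 1) ∧
      (∀ l, p.2.1 l = 0 ∨ p.2.1 l = 1) ∧ (∀ l, p.2.2 l = 0 ∨ p.2.2 l = 1)}
      = gubCoords n ⁻¹' {x | ∀ j, x j = 0 ∨ x j = 1} := by
    ext p
    simp [gubCoords_apply, Sum.forall]
  rw [hS', h01, ← Set.preimage_inter, ← LinearEquiv.preimage_convexHull,
    ← intervalPolytope_eq_convexHull (gubPos_injective n)]

/-- **The single-interferer GUB knapsack polytope is integral.**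
For `n ≥ 1` and a nondecreasing map `q : Fin n → Fin (n+1)` (level `j` of the
interferer is denied iff `q lam ≤ j`, where `q lam = n` means no level), the
polytope of points `(u, v, w)` satisfying the box constraints and the
non-dominated GUB cover inequalities
`u + ∑_{l ≤ lam} v l + ∑_{l ≥ q lam} w l ≤ 2` for every `lam`
equals the convex hull of its 0-1 points. -/
theorem single_interferer_polytope_is_integral
    (n : ℕ) (hn : 1 ≤ n) (q : Fin n → Fin (n + 1)) (hq : Monotone q)
    (S : Set (ℝ × (Fin n → ℝ) × (Fin n → ℝ)))
    (hS : S = {p | 0 ≤ p.1 ∧ p.1 ≤ 1 ∧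
      (∀ l, 0 ≤ p.2.1 l ∧ p.2.1 l ≤ 1) ∧
      (∀ l, 0 ≤ p.2.2 l ∧ p.2.2 l ≤ 1) ∧
      ∀ lam : Fin n,
        p.1 + ∑ l ∈ Finset.Iic lam, p.2.1 l
          + ∑ l ∈ Finset.univ.filter (fun l : Fin n => (q lam : ℕ) ≤ (l : ℕ)), p.2.2 l
          ≤ 2}) :
    S = convexHull ℝ (S ∩ {p : ℝ × (Fin n → ℝ) × (Fin n → ℝ) |
      (p.1 = 0 ∨ p.1 = 1) ∧ (∀ l, p.2.1 l = 0 ∨ p.2.1 l = 1) ∧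
      (∀ l, p.2.2 l = 0 ∨ p.2.2 l = 1)}) :=
  single_interferer_polytope_is_integral_general n q S hS
end

section
/- Let N be a finite set partitioned into pairwise disjoint blocks {S_i}_{i ∈ I} together with one additional disjoint block S_0, let a_j > 0 for all j ∈ N ∪ S_0 and d ∈ ℝ. Let y : N ∪ S_0 → {0,1} satisfy the knapsack constraint ∑_{j ∈ N} a_j y_j − ∑_{j ∈ S_0} a_j y_j ≤ d and the GUB constraints ∑_{j ∈ S_i} y_j ≤ 1 for each i ∈ I and ∑_{j ∈ S_0} y_j ≤ 1. Suppose there is a subset I⁺ ⊆ I, elements c_i ∈ S_i for each i ∈ I⁺, and an element c_0 ∈ S_0 such that ∑_{i ∈ I⁺} a_{c_i} − a_{c_0} > d (a GUB cover). Then the GUB cover inequality ∑_{i ∈ I⁺} ∑_{j ∈ S_i : a_j ≥ a_{c_i}} y_j + ∑_{j ∈ S_0 : a_j ≤ a_{c_0}} y_j ≤ |I⁺| holds. -/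
/-!
If the inequality failed at a 0-1 point, then, every term being a sum of `y` over part of a
GUB block and hence at most one, every term would be positive. In each block `S i` this picks
an active variable of weight at least `a (c i)`, and in `S0` the unique active variable has
weight at most `a c0`. The knapsack left-hand side is then at least
`∑ i ∈ Ip, a (c i) - a c0 > d`, contradicting the knapsack constraint.
-/

open Finset

lemma nonneg_of_eq_zero_or_eq_one {x : ℝ} (h : x = 0 ∨ x = 1) : 0 ≤ x := by
  rcases h with rfl | rfl <;> norm_num

lemma pos_of_card_sub_one_lt_sum {ι : Type*} {s : Finset ι} {f : ι → ℝ}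
    (hf : ∀ i ∈ s, f i ≤ 1) (h : (#s : ℝ) - 1 < ∑ i ∈ s, f i) {i : ι} (hi : i ∈ s) :
    0 < f i := by
  have hdefect : 1 - f i ≤ ∑ k ∈ s, (1 - f k) :=
    single_le_sum (f := fun k => 1 - f k) (fun k hk => sub_nonneg.2 (hf k hk)) hi
  rw [sum_sub_distrib, sum_const, nsmul_one] at hdefect
  linarith

lemma sum_le_sum_biUnion_of_le_sum {ι J : Type*} [Fintype ι] [DecidableEq J]
    {S : ι → Finset J} {g : J → ℝ} {t : ι → ℝ} {I : Finset ι}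
    (hdisj : ∀ i i' : ι, i ≠ i' → Disjoint (S i) (S i')) (hg : ∀ i, ∀ j ∈ S i, 0 ≤ g j)
    (ht : ∀ i ∈ I, t i ≤ ∑ j ∈ S i, g j) :
    ∑ i ∈ I, t i ≤ ∑ j ∈ univ.biUnion S, g j := by
  rw [sum_biUnion fun i _ i' _ hne => hdisj i i' hne]
  calc ∑ i ∈ I, t i ≤ ∑ i ∈ I, ∑ j ∈ S i, g j := sum_le_sum ht
    _ ≤ ∑ i, ∑ j ∈ S i, g j :=
      sum_le_sum_of_subset_of_nonneg (subset_univ I) fun i _ _ => sum_nonneg (hg i)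

section ZeroOneBlock

variable {J : Type*} {s : Finset J} {a y : J → ℝ} {t : ℝ}

lemma sum_filter_le_one (p : J → Prop) [DecidablePred p]
    (hy : ∀ j ∈ s, y j = 0 ∨ y j = 1) (hsum : ∑ j ∈ s, y j ≤ 1) :
    ∑ j ∈ s with p j, y j ≤ 1 :=
  (sum_le_sum_of_subset_of_nonneg (filter_subset p s)
    fun j hj _ => nonneg_of_eq_zero_or_eq_one (hy j hj)).trans hsum

lemma exists_eq_one_of_sum_filter_pos {p : J → Prop} [DecidablePred p]
    (hy : ∀ j ∈ s, y j = 0 ∨ y j = 1) (h : 0 < ∑ j ∈ s with p j, y j) :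
    ∃ j ∈ s, p j ∧ y j = 1 := by
  obtain ⟨j, hj, hpos⟩ := exists_lt_of_sum_lt (f := fun _ => (0 : ℝ)) (by simpa using h)
  rw [mem_filter] at hj
  exact ⟨j, hj.1, hj.2, (hy j hj.1).resolve_left hpos.ne'⟩

lemma le_sum_mul_of_sum_filter_pos (ha : ∀ j ∈ s, 0 ≤ a j)
    (hy : ∀ j ∈ s, y j = 0 ∨ y j = 1) (h : 0 < ∑ j ∈ s with t ≤ a j, y j) :
    t ≤ ∑ j ∈ s, a j * y j := by
  obtain ⟨j, hj, htj, hyj⟩ := exists_eq_one_of_sum_filter_pos hy h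
  calc t ≤ a j * y j := by rwa [hyj, mul_one]
    _ ≤ ∑ k ∈ s, a k * y k :=
      single_le_sum (fun k hk => mul_nonneg (ha k hk) (nonneg_of_eq_zero_or_eq_one (hy k hk))) hj

lemma sum_mul_le_of_sum_filter_pos [DecidableEq J] (hy : ∀ j ∈ s, y j = 0 ∨ y j = 1)
    (hsum : ∑ j ∈ s, y j ≤ 1) (h : 0 < ∑ j ∈ s with a j ≤ t, y j) :
    ∑ j ∈ s, a j * y j ≤ t := by
  obtain ⟨j₀, hj₀, haj₀, hyj₀⟩ := exists_eq_one_of_sum_filter_pos hy h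
  have hothers : ∀ j ∈ s, j ≠ j₀ → y j = 0 := by
    intro j hj hne
    have hpair : ∑ k ∈ {j₀, j}, y k ≤ ∑ k ∈ s, y k :=
      sum_le_sum_of_subset_of_nonneg (insert_subset hj₀ (singleton_subset_iff.2 hj))
        fun k hk _ => nonneg_of_eq_zero_or_eq_one (hy k hk)
    rw [sum_pair hne.symm, hyj₀] at hpair
    linarith [nonneg_of_eq_zero_or_eq_one (hy j hj)]
  rwa [sum_eq_single j₀ (fun j hj hne => by rw [hothers j hj hne, mul_zero])
    (absurd hj₀), hyj₀, mul_one]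

end ZeroOneBlock

theorem wolsey_gub_cover_inequality_general
    {ι J : Type*} [Fintype ι] [DecidableEq J]
    (S : ι → Finset J) (S0 : Finset J)
    (hdisj : ∀ i i' : ι, i ≠ i' → Disjoint (S i) (S i'))
    (N : Finset J) (hN : N = Finset.univ.biUnion S)
    (a : J → ℝ) (ha : ∀ j ∈ N ∪ S0, 0 < a j) (d : ℝ)
    (y : J → ℝ) (hy01 : ∀ j ∈ N ∪ S0, y j = 0 ∨ y j = 1)
    (hknap : ∑ j ∈ N, a j * y j - ∑ j ∈ S0, a j * y j ≤ d)
    (hgub : ∀ i : ι, ∑ j ∈ S i, y j ≤ 1) (hgub0 : ∑ j ∈ S0, y j ≤ 1)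
    (Ip : Finset ι) (c : ι → J) (c0 : J)
    (hcover : ∑ i ∈ Ip, a (c i) - a c0 > d) :
    ∑ i ∈ Ip, ∑ j ∈ (S i).filter (fun j => a (c i) ≤ a j), y j
      + ∑ j ∈ S0.filter (fun j => a j ≤ a c0), y j ≤ Ip.card := by
  have hSN : ∀ i, S i ⊆ N := fun i => hN ▸ subset_biUnion_of_mem S (mem_univ i)
  have haS : ∀ i, ∀ j ∈ S i, 0 ≤ a j := fun i j hj => (ha j (mem_union_left _ (hSN i hj))).le
  have hyS : ∀ i, ∀ j ∈ S i, y j = 0 ∨ y j = 1 :=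
    fun i j hj => hy01 j (mem_union_left _ (hSN i hj))
  have hyS0 : ∀ j ∈ S0, y j = 0 ∨ y j = 1 := fun j hj => hy01 j (mem_union_right _ hj)
  by_contra! hcon
  have hz_le : ∀ i ∈ Ip, ∑ j ∈ S i with a (c i) ≤ a j, y j ≤ 1 :=
    fun i _ => sum_filter_le_one _ (hyS i) (hgub i)
  have hz0_le : ∑ j ∈ S0 with a j ≤ a c0, y j ≤ 1 := sum_filter_le_one _ hyS0 hgub0
  have hz_sum : ∑ i ∈ Ip, ∑ j ∈ S i with a (c i) ≤ a j, y j ≤ #Ip :=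
    (sum_le_card_nsmul Ip _ 1 hz_le).trans_eq (nsmul_one _)
  have hz0_pos : 0 < ∑ j ∈ S0 with a j ≤ a c0, y j := by linarith
  have hz_pos : ∀ i ∈ Ip, 0 < ∑ j ∈ S i with a (c i) ≤ a j, y j :=
    fun i hi => pos_of_card_sub_one_lt_sum hz_le (by linarith) hi
  have hN_ge : ∑ i ∈ Ip, a (c i) ≤ ∑ j ∈ N, a j * y j :=
    hN ▸ sum_le_sum_biUnion_of_le_sum hdisj
      (fun i j hj => mul_nonneg (haS i j hj) (nonneg_of_eq_zero_or_eq_one (hyS i j hj)))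
      fun i hi => le_sum_mul_of_sum_filter_pos (haS i) (hyS i) (hz_pos i hi)
  have hS0_le : ∑ j ∈ S0, a j * y j ≤ a c0 := sum_mul_le_of_sum_filter_pos hyS0 hgub0 hz0_pos
  linarith

/-- **Wolsey's GUB cover inequality for a single negative block.**
A finite set `N` is partitioned into pairwise disjoint blocks `S i` (`i : ι`);
`S0` is one additional disjoint block; `a j > 0` on `N ∪ S0`.  If a 0-1 point
`y` satisfies the knapsack constraint `∑_{j ∈ N} a j * y j - ∑_{j ∈ S0} a j * y j ≤ d`
and the GUB constraints, and if `I⁺ ⊆ ι` with chosen elements `c i ∈ S i` and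
`c0 ∈ S0` form a GUB cover (`∑_{i ∈ I⁺} a (c i) - a c0 > d`), then the lifted
GUB cover inequality holds. -/
theorem wolsey_gub_cover_inequality
    {ι J : Type*} [Fintype ι] [DecidableEq ι] [DecidableEq J]
    (S : ι → Finset J) (S0 : Finset J)
    (hdisj : ∀ i i' : ι, i ≠ i' → Disjoint (S i) (S i'))
    (hdisj0 : ∀ i : ι, Disjoint (S i) S0)
    (N : Finset J) (hN : N = Finset.univ.biUnion S)
    (a : J → ℝ) (ha : ∀ j ∈ N ∪ S0, 0 < a j) (d : ℝ)
    (y : J → ℝ) (hy01 : ∀ j ∈ N ∪ S0, y j = 0 ∨ y j = 1)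
    (hknap : ∑ j ∈ N, a j * y j - ∑ j ∈ S0, a j * y j ≤ d)
    (hgub : ∀ i : ι, ∑ j ∈ S i, y j ≤ 1) (hgub0 : ∑ j ∈ S0, y j ≤ 1)
    (Ip : Finset ι) (c : ι → J) (hc : ∀ i ∈ Ip, c i ∈ S i)
    (c0 : J) (hc0 : c0 ∈ S0)
    (hcover : ∑ i ∈ Ip, a (c i) - a c0 > d) :
    ∑ i ∈ Ip, ∑ j ∈ (S i).filter (fun j => a (c i) ≤ a j), y j
      + ∑ j ∈ S0.filter (fun j => a j ≤ a c0), y j ≤ Ip.card :=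
  wolsey_gub_cover_inequality_general S S0 hdisj N hN a ha d y hy01 hknap hgub hgub0 Ip c c0 hcover
end

section
/- Let B be a finite set with β ∈ B, power values 0 = P_1 ≤ … ≤ P_n, fading coefficients a_b > 0, δ ∈ ℝ, and let (x*, z*) with x* ∈ ℝ and z* : B × {1,…,n} → ℝ≥0 satisfying ∑_{l=1}^{n} z*_{b,l} = 1 for all b ∈ B. Define, over vectors u : B × {1,…,n} → ℝ with u ≥ 0, ∑_{l} u_{b,l} = 1 for all b ∈ B, and ∑_{b ≠ β} a_b ∑_{l} P_l u_{b,l} − a_β ∑_{l} P_l u_{β,l} ≥ δ, the objective f(u) = ∑_{l} u_{β,l} ∑_{k=1}^{l} z*_{β,k} + ∑_{b ≠ β} ∑_{l} u_{b,l} (∑_{k=l}^{n} z*_{b,k} − 1), and let Z be its supremum over this feasible region. If Z ≤ 1 − x*, then no GUB cover inequality is violated by (x*, z*): for every nonempty Γ = {b_1,…,b_k} ⊆ B∖{β}, every λ ∈ {1,…,n}, and every tuple (q_1,…,q_k) with ∑_{i=1}^{k} a_{b_i} P_{q_i} − a_β P_λ > δ, one has x* + ∑_{l=1}^{λ} z*_{β,l}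 + ∑_{i=1}^{k} ∑_{j=q_i}^{n} z*_{b_i,j} ≤ k + 1. -/
/-!
The incidence vector of a GUB cover is feasible for (SEP): it picks level `lam` for `β`,
level `q b` for `b ∈ Γ` and the switched-off level `P₁ = 0` elsewhere, so its knapsack value
is the cover's. Its objective value is the left-hand side of the cover inequality minus
`xs + |Γ|`, since a switched-off transmitter contributes `∑ₗ zs b l - 1 = 0`. Bounding that
value by `Z ≤ 1 - xs` gives the cover inequality.
-/

open Finset

theorem sum_mul_pi_single_one {ι R : Type*} [Fintype ι] [DecidableEq ι] [NonAssocSemiring R]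
    (f : ι → R) (i : ι) : ∑ l, f l * (Pi.single i (1 : R) : ι → R) l = f i := by
  simp [Pi.single_apply]

section CoverLevels

variable {B L : Type*} [Fintype B] [DecidableEq B]

def coverLevels (β : B) (Γ : Finset B) (lam : L) (q : B → L) (off : L) : B → L :=
  fun b => if b = β then lam else if b ∈ Γ then q b else off

theorem sum_erase_coverLevels {M : Type*} [AddCommMonoid M] {β : B} {Γ : Finset B} (hβ : β ∉ Γ)
    (lam : L) (q : B → L) {off : L} (F : B → L → M) (hoff : ∀ b, F b off = 0) :
    ∑ b ∈ univ.erase β, F b (coverLevels β Γ lam q off b) = ∑ b ∈ Γ, F b (q b) := by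
  have hΓ : Γ ⊆ univ.erase β := subset_erase.2 ⟨subset_univ Γ, hβ⟩
  refine (sum_subset hΓ fun b hb hbΓ => ?_).symm.trans (sum_congr rfl fun b hb => ?_)
  · simp [coverLevels, ne_of_mem_erase hb, hbΓ, hoff]
  · simp [coverLevels, ne_of_mem_of_not_mem hb hβ, hb]

end CoverLevels

section SeparationLP

variable {B : Type*} [Fintype B] [DecidableEq B] {n : ℕ}

def sepObjective (β : B) (zs u : B → Fin n → ℝ) : ℝ :=
  ∑ l, u β l * (∑ k ∈ Iic l, zs β k) +
    ∑ b ∈ univ.erase β, ∑ l, u b l * ((∑ k ∈ Ici l, zs b k) - 1)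

def sirKnapsack (β : B) (a : B → ℝ) (P : Fin n → ℝ) (u : B → Fin n → ℝ) : ℝ :=
  ∑ b ∈ univ.erase β, a b * ∑ l, P l * u b l - a β * ∑ l, P l * u β l

def sepRegion (β : B) (a : B → ℝ) (P : Fin n → ℝ) (δ : ℝ) : Set (B → Fin n → ℝ) :=
  {u | (∀ b l, 0 ≤ u b l) ∧ (∀ b, ∑ l, u b l = 1) ∧ sirKnapsack β a P u ≥ δ}

def levelIndicator (c : B → Fin n) : B → Fin n → ℝ :=
  fun b => Pi.single (c b) 1

variable (β : B) (c : B → Fin n)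

theorem sepObjective_levelIndicator (zs : B → Fin n → ℝ) :
    sepObjective β zs (levelIndicator c) =
      ∑ k ∈ Iic (c β), zs β k + ∑ b ∈ univ.erase β, (∑ k ∈ Ici (c b), zs b k - 1) := by
  simp only [sepObjective, levelIndicator, mul_comm (Pi.single _ _ _), sum_mul_pi_single_one]

theorem sirKnapsack_levelIndicator (a : B → ℝ) (P : Fin n → ℝ) :
    sirKnapsack β a P (levelIndicator c) =
      ∑ b ∈ univ.erase β, a b * P (c b) - a β * P (c β) := by
  simp only [sirKnapsack, levelIndicator, sum_mul_pi_single_one]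

theorem levelIndicator_mem_sepRegion {a : B → ℝ} {P : Fin n → ℝ} {δ : ℝ}
    (h : δ ≤ ∑ b ∈ univ.erase β, a b * P (c b) - a β * P (c β)) :
    levelIndicator c ∈ sepRegion β a P δ := by
  refine ⟨fun b l => ?_, fun b => ?_, (sirKnapsack_levelIndicator β c a P).symm ▸ h⟩
  · simp only [levelIndicator, Pi.single_apply]
    positivity
  · simp [levelIndicator]

end SeparationLP

theorem separation_LP_sound_general
    {B : Type*} [Fintype B] [DecidableEq B] (β : B) (n : ℕ) (hn : 0 < n)
    (P : Fin n → ℝ) (hP1 : P ⟨0, hn⟩ = 0)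
    (a : B → ℝ) (δ : ℝ)
    (xs : ℝ) (zs : B → Fin n → ℝ)
    (hgub : ∀ b, ∑ l, zs b l = 1)
    (Z : ℝ)
    (hZ : IsLUB ((fun u : B → Fin n → ℝ =>
        ∑ l, u β l * (∑ k ∈ Finset.Iic l, zs β k) +
          ∑ b ∈ Finset.univ.erase β, ∑ l,
            u b l * ((∑ k ∈ Finset.Ici l, zs b k) - 1)) ''
      {u : B → Fin n → ℝ | (∀ b l, 0 ≤ u b l) ∧ (∀ b, ∑ l, u b l = 1) ∧
        ∑ b ∈ Finset.univ.erase β, a b * ∑ l, P l * u b l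
          - a β * ∑ l, P l * u β l ≥ δ}) Z)
    (hZle : Z ≤ 1 - xs) :
    ∀ Γ : Finset B, Γ.Nonempty → β ∉ Γ →
      ∀ lam : Fin n, ∀ q : B → Fin n,
        ∑ b ∈ Γ, a b * P (q b) - a β * P lam > δ →
        xs + ∑ l ∈ Finset.Iic lam, zs β l
          + ∑ b ∈ Γ, ∑ j ∈ Finset.Ici (q b), zs b j ≤ Γ.card + 1 := by
  intro Γ _ hβ lam q hcover
  set c := coverLevels β Γ lam q (⟨0, hn⟩ : Fin n)
  have hIci : Ici (⟨0, hn⟩ : Fin n) = univ :=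
    eq_univ_of_forall fun k => mem_Ici.2 (Nat.zero_le k.val)
  have hfeas : levelIndicator c ∈ sepRegion β a P δ := by
    refine levelIndicator_mem_sepRegion β c ?_
    rw [sum_erase_coverLevels hβ lam q (fun b l => a b * P l) (by simp [hP1])]
    simpa [c, coverLevels] using hcover.le
  have hvalue : sepObjective β zs (levelIndicator c) =
      ∑ l ∈ Iic lam, zs β l + (∑ b ∈ Γ, ∑ j ∈ Ici (q b), zs b j - Γ.card) := by
    rw [sepObjective_levelIndicator,
      sum_erase_coverLevels hβ lam q (fun b l => ∑ k ∈ Ici l, zs b k - 1) (by simp [hIci, hgub])]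
    simp [c, coverLevels, sum_sub_distrib]
  have hbound : sepObjective β zs (levelIndicator c) ≤ 1 - xs :=
    (hZ.1 ⟨_, hfeas, rfl⟩).trans hZle
  linarith

/-- **Soundness of the separation LP (SEP).**  Let `(xs, zs)` be a (possibly
fractional) point with `zs ≥ 0` and `∑_l zs b l = 1` for every transmitter
`b`.  Let `Z` be the supremum of the SEP objective over the feasible region
(nonnegative `u` with unit GUB sums satisfying the cover knapsack condition).
If `Z ≤ 1 - xs`, then `(xs, zs)` satisfies every GUB cover inequality. -/
theorem separation_LP_sound
    {B : Type*} [Fintype B] [DecidableEq B] (β : B) (n : ℕ) (hn : 0 < n)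
    (P : Fin n → ℝ) (hP1 : P ⟨0, hn⟩ = 0) (hPmono : Monotone P)
    (a : B → ℝ) (ha : ∀ b, 0 < a b) (δ : ℝ)
    (xs : ℝ) (zs : B → Fin n → ℝ) (hzs : ∀ b l, 0 ≤ zs b l)
    (hgub : ∀ b, ∑ l, zs b l = 1)
    (Z : ℝ)
    (hZ : IsLUB ((fun u : B → Fin n → ℝ =>
        ∑ l, u β l * (∑ k ∈ Finset.Iic l, zs β k) +
          ∑ b ∈ Finset.univ.erase β, ∑ l,
            u b l * ((∑ k ∈ Finset.Ici l, zs b k) - 1)) ''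
      {u : B → Fin n → ℝ | (∀ b l, 0 ≤ u b l) ∧ (∀ b, ∑ l, u b l = 1) ∧
        ∑ b ∈ Finset.univ.erase β, a b * ∑ l, P l * u b l
          - a β * ∑ l, P l * u β l ≥ δ}) Z)
    (hZle : Z ≤ 1 - xs) :
    ∀ Γ : Finset B, Γ.Nonempty → β ∉ Γ →
      ∀ lam : Fin n, ∀ q : B → Fin n,
        ∑ b ∈ Γ, a b * P (q b) - a β * P lam > δ →
        xs + ∑ l ∈ Finset.Iic lam, zs β l
          + ∑ b ∈ Γ, ∑ j ∈ Finset.Ici (q b), zs b j ≤ Γ.card + 1 :=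
  separation_LP_sound_general β n hn P hP1 a δ xs zs hgub Z hZ hZle
end
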